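/- arXiv:2512.12953 — 3 statements merged into one kernel-verified Lean document; each statement's English description precedes it below -/
import Mathlib

section
/- Let Σ̂ ∈ ℝ^{p×p} be symmetric positive definite, let A ∈ ℝ^{q×p} have full row rank q < p with AΣ̂⁻¹Aᵀ invertible, and let V ∈ ℝ^{p×(p−q)} have orthonormal columns spanning the null space of A (so AV = 0 and VᵀΣ̂V is invertible). Then C_{A⊥} := I_p − Σ̂⁻¹Aᵀ(AΣ̂⁻¹Aᵀ)⁻¹A satisfies C_{A⊥} = V(VᵀΣ̂V)⁻¹VᵀΣ̂. -/
open Matrix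

/-!
Both sides are the identity on `ker A` and send the `Σ̂`-orthogonal complement `range (Σ̂⁻¹Aᵀ)`
of `ker A` to zero. In matrix form: a matrix `X` is determined by `A X` and `VᵀΣ̂ X`, because
`A (X - Y) = 0` puts the columns of `X - Y` into `range V = ker A`, and `VᵀΣ̂V` is invertible.
The two sides agree after left multiplication by `A` (both give `0`) and by `VᵀΣ̂`
(both give `VᵀΣ̂`).
-/

namespace Matrix

variable {R : Type*} {l m n k : Type*} [Fintype n] [Fintype k]

theorem mul_eq_zero_of_range_mulVec_subset [Semiring R] [DecidableEq k]
    {A : Matrix m n R} {V : Matrix n k R}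
    (hV : Set.range (fun α : k → R => V *ᵥ α) ⊆ {β | A *ᵥ β = 0}) : A * V = 0 :=
  ext_iff_mulVec.mpr fun α => by rw [← mulVec_mulVec, zero_mulVec]; exact hV ⟨α, rfl⟩

theorem exists_mul_eq_of_mul_eq_zero [Semiring R] [Fintype l] [DecidableEq l]
    {A : Matrix m n R} {V : Matrix n k R} {M : Matrix n l R}
    (hV : {β | A *ᵥ β = 0} ⊆ Set.range (fun α : k → R => V *ᵥ α)) (hM : A * M = 0) :
    ∃ N : Matrix k l R, V * N = M := by
  have hcol : ∀ j, ∃ α, V *ᵥ α = M *ᵥ Pi.single j 1 := fun j =>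
    hV (by rw [Set.mem_ofPred_eq, mulVec_mulVec, hM, zero_mulVec])
  choose N hN using hcol
  refine ⟨(of N)ᵀ, ext_of_mulVec_single fun j => ?_⟩
  rw [← mulVec_mulVec, mulVec_single_one, ← hN]
  rfl

theorem eq_of_mul_eq_of_mul_eq [CommRing R] [DecidableEq k] [Fintype l] [DecidableEq l]
    {A : Matrix m n R} {V : Matrix n k R} {W : Matrix k n R} {X Y : Matrix n l R}
    (hV : {β | A *ᵥ β = 0} ⊆ Set.range (fun α : k → R => V *ᵥ α)) (hWV : IsUnit (W * V).det)
    (hA : A * X = A * Y) (hW : W * X = W * Y) : X = Y := by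
  obtain ⟨N, hN⟩ :=
    exists_mul_eq_of_mul_eq_zero (M := X - Y) hV (by rw [Matrix.mul_sub, hA, sub_self])
  have hN0 : N = 0 := by
    have : W * V * N = 0 := by rw [Matrix.mul_assoc, hN, Matrix.mul_sub, hW, sub_self]
    simpa [hWV] using congrArg ((W * V)⁻¹ * ·) this
  rw [← sub_eq_zero, ← hN, hN0, Matrix.mul_zero]

theorem mul_mul_nonsing_inv_mul_self [CommRing R] [Fintype m] [DecidableEq m] (A : Matrix m n R)
    (B : Matrix n m R) (h : IsUnit (A * B).det) : A * B * (A * B)⁻¹ * A = A := by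
  rw [mul_nonsing_inv _ h, Matrix.one_mul]

end Matrix

theorem stmt3_general {p q : ℕ}
    (S : Matrix (Fin p) (Fin p) ℝ) (hS : S.PosDef)
    (A : Matrix (Fin q) (Fin p) ℝ)
    (hASA : IsUnit (A * S⁻¹ * Aᵀ).det)
    (V : Matrix (Fin p) (Fin (p - q)) ℝ) (hV : Vᵀ * V = 1)
    (hVspan : Set.range (fun α : Fin (p - q) → ℝ => V *ᵥ α) = {β | A *ᵥ β = 0}) :
    (1 : Matrix (Fin p) (Fin p) ℝ) - S⁻¹ * Aᵀ * (A * S⁻¹ * Aᵀ)⁻¹ * A =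
      V * (Vᵀ * S * V)⁻¹ * Vᵀ * S := by
  have hAV : A * V = 0 := mul_eq_zero_of_range_mulVec_subset hVspan.subset
  have hV_inj : Function.Injective V.mulVec :=
    Function.LeftInverse.injective (g := Vᵀ.mulVec) fun x => by
      rw [mulVec_mulVec, hV, one_mulVec]
  have hVSV : IsUnit (Vᵀ * S * V).det :=
    (hS.conjTranspose_mul_mul_same hV_inj).det_pos.ne'.isUnit
  have hAP : A * (S⁻¹ * Aᵀ * (A * S⁻¹ * Aᵀ)⁻¹ * A) = A := by
    simpa only [Matrix.mul_assoc] using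
      mul_mul_nonsing_inv_mul_self A (S⁻¹ * Aᵀ) (by rwa [← Matrix.mul_assoc])
  have hAQ : A * (V * (Vᵀ * S * V)⁻¹ * Vᵀ * S) = 0 := by
    simp only [← Matrix.mul_assoc, hAV, Matrix.zero_mul]
  have hVSP : Vᵀ * S * (S⁻¹ * Aᵀ * (A * S⁻¹ * Aᵀ)⁻¹ * A) = 0 := by
    simp only [Matrix.mul_assoc]
    rw [mul_nonsing_inv_cancel_left _ _ hS.det_pos.ne'.isUnit, ← Matrix.mul_assoc,
      ← transpose_mul, hAV, transpose_zero, Matrix.zero_mul]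
  have hVSQ : Vᵀ * S * (V * (Vᵀ * S * V)⁻¹ * Vᵀ * S) = Vᵀ * S := by
    simpa only [Matrix.mul_assoc] using mul_mul_nonsing_inv_mul_self (Vᵀ * S) V hVSV
  refine eq_of_mul_eq_of_mul_eq hVspan.symm.subset hVSV ?_ ?_
  · rw [Matrix.mul_sub, Matrix.mul_one, hAP, sub_self, hAQ]
  · rw [Matrix.mul_sub, Matrix.mul_one, hVSP, sub_zero, hVSQ]

/-- For symmetric positive definite `Σ̂`, full row rank `A` with
`AΣ̂⁻¹Aᵀ` invertible, and `V` with orthonormal columns spanning the null space of `A`,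
the constrained projector satisfies `C_{A⊥} = V(VᵀΣ̂V)⁻¹VᵀΣ̂`. -/
theorem stmt3 {p q : ℕ} (hqp : q < p)
    (S : Matrix (Fin p) (Fin p) ℝ) (hS : S.PosDef)
    (A : Matrix (Fin q) (Fin p) ℝ) (hA : A.rank = q)
    (hASA : IsUnit (A * S⁻¹ * Aᵀ).det)
    (V : Matrix (Fin p) (Fin (p - q)) ℝ) (hV : Vᵀ * V = 1)
    (hVspan : Set.range (fun α : Fin (p - q) → ℝ => V *ᵥ α) = {β | A *ᵥ β = 0}) :
    (1 : Matrix (Fin p) (Fin p) ℝ) - S⁻¹ * Aᵀ * (A * S⁻¹ * Aᵀ)⁻¹ * A =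
      V * (Vᵀ * S * V)⁻¹ * Vᵀ * S :=
  stmt3_general S hS A hASA V hV hVspan
end

section
/- Fix a design matrix X ∈ ℝ^{n×p} with Σ̂_n := XᵀX/n invertible, a constraint matrix A ∈ ℝ^{q×p} of full row rank q < p with AΣ̂_n⁻¹Aᵀ invertible, β* ∈ ℝ^p with Aβ* = c, and let ε = (ε_1,…,ε_n) have independent components with E[ε_i] = 0 and Var(ε_i) = σ². Let y = Xβ* + ε and β̃ := C_{A⊥}β̂_LS + Σ̂_n⁻¹Aᵀ(AΣ̂_n⁻¹Aᵀ)⁻¹c. Then E‖β̃ − β*‖² = (σ²/n)·Tr(C_{A⊥}Σ̂_n⁻¹). -/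
/-!
Since `C_{A⊥}β* + Σ̂ₙ⁻¹Aᵀ(AΣ̂ₙ⁻¹Aᵀ)⁻¹Aβ* = β*` and `β̂_LS = β* + (XᵀX)⁻¹Xᵀε`, the error is
linear in the noise: `β̃ − β* = Lε` with `L = C_{A⊥}(XᵀX)⁻¹Xᵀ`. For uncorrelated noise of
variance `σ²`, `E‖Lε‖² = σ² Tr(LLᵀ)`, and `LLᵀ = n⁻¹ C_{A⊥}Σ̂ₙ⁻¹C_{A⊥}ᵀ = n⁻¹ C_{A⊥}Σ̂ₙ⁻¹`
because `C_{A⊥}Σ̂ₙ⁻¹Aᵀ = 0`.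
-/

open Matrix MeasureTheory ProbabilityTheory

noncomputable section

def sqNorm {m : Type*} [Fintype m] (v : m → ℝ) : ℝ := ∑ i, (v i) ^ 2

section Noise

variable {Ω ι : Type*} [MeasurableSpace Ω] {μ : Measure Ω}
  {ε : Ω → ι → ℝ} {σ : ℝ}

theorem integral_mul_eq_ite_of_iIndepFun [DecidableEq ι]
    (hmeas : ∀ i, Measurable fun ω => ε ω i) (hindep : iIndepFun (fun i ω => ε ω i) μ)
    (hmean : ∀ i, ∫ ω, ε ω i ∂μ = 0) (hvar : ∀ i, ∫ ω, (ε ω i) ^ 2 ∂μ = σ ^ 2) (j k : ι) :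
    ∫ ω, ε ω j * ε ω k ∂μ = if j = k then σ ^ 2 else 0 := by
  rcases eq_or_ne j k with rfl | hjk
  · simpa [pow_two] using hvar j
  · rw [if_neg hjk, (hindep.indepFun hjk).integral_fun_mul_eq_mul_integral
      (hmeas j).aestronglyMeasurable (hmeas k).aestronglyMeasurable, hmean j, zero_mul]

theorem integrable_mul_of_integrable_sq (hmeas : ∀ i, Measurable fun ω => ε ω i)
    (hint : ∀ i, Integrable (fun ω => (ε ω i) ^ 2) μ) (j k : ι) :
    Integrable (fun ω => ε ω j * ε ω k) μ :=
  have hmem : ∀ i, MemLp (fun ω => ε ω i) 2 μ := fun i =>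
    (memLp_two_iff_integrable_sq (hmeas i).aestronglyMeasurable).2 (hint i)
  (hmem j).integrable_mul (hmem k)

theorem integral_quadratic_form_of_iIndepFun [Fintype ι] [DecidableEq ι]
    (hmeas : ∀ i, Measurable fun ω => ε ω i) (hindep : iIndepFun (fun i ω => ε ω i) μ)
    (hmean : ∀ i, ∫ ω, ε ω i ∂μ = 0) (hvar : ∀ i, ∫ ω, (ε ω i) ^ 2 ∂μ = σ ^ 2)
    (hint : ∀ i, Integrable (fun ω => (ε ω i) ^ 2) μ) (Q : Matrix ι ι ℝ) :
    ∫ ω, ∑ j, ∑ k, Q j k * (ε ω j * ε ω k) ∂μ = σ ^ 2 * Q.trace := by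
  have hQ (j k : ι) : Integrable (fun ω => Q j k * (ε ω j * ε ω k)) μ :=
    (integrable_mul_of_integrable_sq hmeas hint j k).const_mul _
  rw [integral_finsetSum _ fun j _ => integrable_finsetSum _ fun k _ => hQ j k]
  simp_rw [integral_finsetSum _ fun k _ => hQ _ k, integral_const_mul,
    integral_mul_eq_ite_of_iIndepFun hmeas hindep hmean hvar, mul_ite, mul_zero,
    Finset.sum_ite_eq, Finset.mem_univ, if_true, trace, diag_apply, Finset.mul_sum, mul_comm]

theorem sqNorm_mulVec {m : Type*} [Fintype m] [Fintype ι] (L : Matrix m ι ℝ) (v : ι → ℝ) :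
    sqNorm (L *ᵥ v) = ∑ j, ∑ k, (Lᵀ * L) j k * (v j * v k) := by
  simp only [sqNorm, mulVec, dotProduct, pow_two, mul_apply,
    transpose_apply, Finset.sum_mul, Finset.mul_sum]
  rw [Finset.sum_comm]
  refine Finset.sum_congr rfl fun j _ => ?_
  rw [Finset.sum_comm]
  exact Finset.sum_congr rfl fun k _ => Finset.sum_congr rfl fun i _ => by ring

theorem integral_sqNorm_mulVec_of_iIndepFun {m : Type*} [Fintype m] [Fintype ι] [DecidableEq ι]
    (hmeas : ∀ i, Measurable fun ω => ε ω i) (hindep : iIndepFun (fun i ω => ε ω i) μ)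
    (hmean : ∀ i, ∫ ω, ε ω i ∂μ = 0) (hvar : ∀ i, ∫ ω, (ε ω i) ^ 2 ∂μ = σ ^ 2)
    (hint : ∀ i, Integrable (fun ω => (ε ω i) ^ 2) μ) (L : Matrix m ι ℝ) :
    ∫ ω, sqNorm (L *ᵥ ε ω) ∂μ = σ ^ 2 * (L * Lᵀ).trace := by
  simp_rw [sqNorm_mulVec]
  rw [integral_quadratic_form_of_iIndepFun hmeas hindep hmean hvar hint, trace_mul_comm]

end Noise

section Algebra

variable {R : Type*} [CommRing R] {m k ι : Type*} [Fintype m] [DecidableEq m]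
  [Fintype k] [DecidableEq k] [Fintype ι]

theorem isUnit_det_of_isUnit_det_smul {r : R} {B : Matrix m m R} (h : IsUnit (r • B).det) :
    IsUnit B.det := by
  rw [det_smul] at h
  exact isUnit_of_mul_isUnit_right h

omit [DecidableEq k] in
theorem one_sub_mul_mulVec_add_sub (K : Matrix m k R) (A : Matrix k m R) (β e : m → R) :
    (1 - K * A) *ᵥ (β + e) + K *ᵥ (A *ᵥ β) - β = (1 - K * A) *ᵥ e := by
  simp only [mulVec_add, sub_mulVec, one_mulVec, mulVec_mulVec]
  abel

theorem inv_transpose_mul_mulVec_mulVec_add {X : Matrix ι m R} (hX : IsUnit (Xᵀ * X).det)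
    (β : m → R) (e : ι → R) :
    ((Xᵀ * X)⁻¹ * Xᵀ) *ᵥ (X *ᵥ β + e) = β + ((Xᵀ * X)⁻¹ * Xᵀ) *ᵥ e := by
  rw [mulVec_add, mulVec_mulVec, Matrix.mul_assoc, nonsing_inv_mul _ hX, one_mulVec]

theorem inv_transpose_mul_mul_transpose {X : Matrix ι m R} (hX : IsUnit (Xᵀ * X).det) :
    ((Xᵀ * X)⁻¹ * Xᵀ) * ((Xᵀ * X)⁻¹ * Xᵀ)ᵀ = (Xᵀ * X)⁻¹ := by
  rw [transpose_mul, transpose_nonsing_inv, transpose_mul, transpose_transpose,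
    Matrix.mul_assoc, ← Matrix.mul_assoc Xᵀ, nonsing_inv_mul_cancel_left _ _ hX]

/-- `C_{A⊥}` of the paper is `constraintProjector Σ̂ₙ⁻¹ A`. -/
def constraintProjector (W : Matrix m m R) (A : Matrix k m R) : Matrix m m R :=
  1 - W * Aᵀ * (A * W * Aᵀ)⁻¹ * A

theorem constraintProjector_mul_mul_transpose {W : Matrix m m R} (hW : Wᵀ = W)
    {A : Matrix k m R} (hA : IsUnit (A * W * Aᵀ).det) :
    constraintProjector W A * W * (constraintProjector W A)ᵀ = constraintProjector W A * W := by
  set C := constraintProjector W A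
  have hCt : Cᵀ = 1 - Aᵀ * (A * W * Aᵀ)⁻¹ * A * W := by
    simp only [C, constraintProjector, transpose_sub, transpose_one, transpose_mul,
      transpose_transpose, transpose_nonsing_inv, hW, Matrix.mul_assoc]
  have hCWA : C * W * Aᵀ = 0 := by
    simp only [C, constraintProjector, Matrix.sub_mul, Matrix.one_mul, Matrix.mul_assoc]
    rw [← Matrix.mul_assoc A W, nonsing_inv_mul _ hA, Matrix.mul_one, sub_self]
  rw [hCt, Matrix.mul_sub, Matrix.mul_one, ← Matrix.mul_assoc, ← Matrix.mul_assoc,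
    ← Matrix.mul_assoc, hCWA, Matrix.zero_mul, Matrix.zero_mul, Matrix.zero_mul, sub_zero]

end Algebra

theorem stmt5_general {n p q : ℕ}
    {Ω : Type} [MeasurableSpace Ω] (μ : Measure Ω)
    (X : Matrix (Fin n) (Fin p) ℝ) (A : Matrix (Fin q) (Fin p) ℝ)
    (βs : Fin p → ℝ) (c : Fin q → ℝ) (σ : ℝ)
    (hc : A *ᵥ βs = c)
    (hS : IsUnit ((n : ℝ)⁻¹ • (Xᵀ * X)).det)
    (hASA : IsUnit (A * ((n : ℝ)⁻¹ • (Xᵀ * X))⁻¹ * Aᵀ).det)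
    (ε : Ω → Fin n → ℝ) (hmeas : ∀ i, Measurable fun ω => ε ω i)
    (hindep : iIndepFun (fun i ω => ε ω i) μ)
    (hmean : ∀ i, ∫ ω, ε ω i ∂μ = 0)
    (hvar : ∀ i, ∫ ω, (ε ω i) ^ 2 ∂μ = σ ^ 2)
    (hint : ∀ i, Integrable (fun ω => (ε ω i) ^ 2) μ) :
    let S := (n : ℝ)⁻¹ • (Xᵀ * X)
    let CA := (1 : Matrix (Fin p) (Fin p) ℝ) - S⁻¹ * Aᵀ * (A * S⁻¹ * Aᵀ)⁻¹ * A
    ∫ ω, sqNorm ((CA *ᵥ (((Xᵀ * X)⁻¹ * Xᵀ) *ᵥ (X *ᵥ βs + ε ω)) +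
          (S⁻¹ * Aᵀ * (A * S⁻¹ * Aᵀ)⁻¹) *ᵥ c) - βs) ∂μ =
      σ ^ 2 / n * Matrix.trace (CA * S⁻¹) := by
  intro S CA
  have hX : IsUnit (Xᵀ * X).det := isUnit_det_of_isUnit_det_smul hS
  have hXS : (Xᵀ * X)⁻¹ = (n : ℝ)⁻¹ • S⁻¹ :=
    inv_eq_left_inv (by rw [Matrix.smul_mul, ← Matrix.mul_smul]; exact nonsing_inv_mul S hS)
  have herror (ω : Ω) : CA *ᵥ (((Xᵀ * X)⁻¹ * Xᵀ) *ᵥ (X *ᵥ βs + ε ω)) +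
      (S⁻¹ * Aᵀ * (A * S⁻¹ * Aᵀ)⁻¹) *ᵥ c - βs = (CA * ((Xᵀ * X)⁻¹ * Xᵀ)) *ᵥ ε ω := by
    rw [inv_transpose_mul_mulVec_mulVec_add hX, ← hc, one_sub_mul_mulVec_add_sub, mulVec_mulVec]
  have hproj : CA * S⁻¹ * CAᵀ = CA * S⁻¹ := constraintProjector_mul_mul_transpose
    (by rw [transpose_nonsing_inv, transpose_smul, transpose_mul, transpose_transpose]) hASA
  have hcov : (CA * ((Xᵀ * X)⁻¹ * Xᵀ)) * (CA * ((Xᵀ * X)⁻¹ * Xᵀ))ᵀ = (n : ℝ)⁻¹ • (CA * S⁻¹) := by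
    rw [transpose_mul, Matrix.mul_assoc, ← Matrix.mul_assoc _ _ CAᵀ,
      inv_transpose_mul_mul_transpose hX, hXS, Matrix.smul_mul, Matrix.mul_smul,
      ← Matrix.mul_assoc, hproj]
  simp_rw [herror]
  rw [integral_sqNorm_mulVec_of_iIndepFun hmeas hindep hmean hvar hint, hcov, trace_smul,
    smul_eq_mul, div_eq_mul_inv, mul_assoc]

/-- Fixed design `X` with `Σ̂ₙ := XᵀX/n` invertible, `A` of full row rank
`q < p` with `AΣ̂ₙ⁻¹Aᵀ` invertible, `Aβ* = c`, and noise `ε` with independent components of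
mean `0` and variance `σ²`.  For `y = Xβ* + ε`, the constrained least squares estimator
`β̃ = C_{A⊥}β̂_LS + Σ̂ₙ⁻¹Aᵀ(AΣ̂ₙ⁻¹Aᵀ)⁻¹c` satisfies
`E‖β̃ − β*‖² = (σ²/n)·Tr(C_{A⊥}Σ̂ₙ⁻¹)`. -/
theorem stmt5 {n p q : ℕ} (hqp : q < p)
    {Ω : Type} [MeasurableSpace Ω] (μ : Measure Ω) [IsProbabilityMeasure μ]
    (X : Matrix (Fin n) (Fin p) ℝ) (A : Matrix (Fin q) (Fin p) ℝ)
    (βs : Fin p → ℝ) (c : Fin q → ℝ) (σ : ℝ)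
    (hA : A.rank = q) (hc : A *ᵥ βs = c)
    (hS : IsUnit ((n : ℝ)⁻¹ • (Xᵀ * X)).det)
    (hASA : IsUnit (A * ((n : ℝ)⁻¹ • (Xᵀ * X))⁻¹ * Aᵀ).det)
    (ε : Ω → Fin n → ℝ) (hmeas : ∀ i, Measurable fun ω => ε ω i)
    (hindep : iIndepFun (fun i ω => ε ω i) μ)
    (hmean : ∀ i, ∫ ω, ε ω i ∂μ = 0)
    (hvar : ∀ i, ∫ ω, (ε ω i) ^ 2 ∂μ = σ ^ 2)
    (hint : ∀ i, Integrable (fun ω => (ε ω i) ^ 2) μ) :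
    let S := (n : ℝ)⁻¹ • (Xᵀ * X)
    let CA := (1 : Matrix (Fin p) (Fin p) ℝ) - S⁻¹ * Aᵀ * (A * S⁻¹ * Aᵀ)⁻¹ * A
    ∫ ω, sqNorm ((CA *ᵥ (((Xᵀ * X)⁻¹ * Xᵀ) *ᵥ (X *ᵥ βs + ε ω)) +
          (S⁻¹ * Aᵀ * (A * S⁻¹ * Aᵀ)⁻¹) *ᵥ c) - βs) ∂μ =
      σ ^ 2 / n * Matrix.trace (CA * S⁻¹) :=
  stmt5_general μ X A βs c σ hc hS hASA ε hmeas hindep hmean hvar hint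
end
end

section
/- Consider the model y = Xβ* + ε where X ∈ ℝ^{n×p} has i.i.d. rows drawn from N(0, Σ) with Σ symmetric positive definite, ε has i.i.d. components with mean 0 and variance σ² and is independent of X, A ∈ ℝ^{q×p} has full row rank q < p, and Aβ* = 0 (constraint vector c = 0). Then the j-th coordinate of the projected oracle estimator β̂_{Σ,P} := (1/n)·P_{A⊥}Σ⁻¹Xᵀy satisfies Var(β̂_{Σ,P,j}) = (1/n)·(β*_j)² + ((σ² + ‖Σ^{1/2}β*‖²)/n)·e_jᵀP_{A⊥}Σ⁻¹P_{A⊥}e_j. -/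
/-!
Write `c` for the `j`-th row of `P_{A⊥} Σ⁻¹` and `x_i` for the rows of `X`; the coordinate is
`n⁻¹ ∑ᵢ (c·xᵢ) (β*·xᵢ + εᵢ)`. Since the noise is white and independent of the design, the
noise terms are uncorrelated with the signal terms and with each other, and add
`σ² ∑ᵢ E (c·xᵢ)²`; since the rows are independent, the signal terms add their variances.
For a centered Gaussian vector `x`, polarization expresses `E[(u·x)² (w·x)²]` through fourth
moments of the one-dimensional Gaussians `v·x`, whence
`Var((u·x)(w·x)) = (uᵀΣu)(wᵀΣw) + (uᵀΣw)²`. Finally `cᵀΣβ* = (P_{A⊥}β*)ⱼ = β*ⱼ` because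
`Aβ* = 0`, and `cᵀΣc = (P_{A⊥}Σ⁻¹P_{A⊥})ⱼⱼ` because `P_{A⊥}` is symmetric.
-/

open Matrix MeasureTheory ProbabilityTheory

noncomputable section

/-- The square root of a positive semidefinite matrix, as defined in the older Mathlib
(removed since in favour of `CFC.sqrt`). -/
def Matrix.PosSemidef.sqrt {n : Type*} [Fintype n] [DecidableEq n] {A : Matrix n n ℝ}
    (hA : A.PosSemidef) : Matrix n n ℝ :=
  hA.1.eigenvectorUnitary.1 * diagonal ((↑) ∘ Real.sqrt ∘ hA.1.eigenvalues) *
    (star hA.1.eigenvectorUnitary : Matrix n n ℝ)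

/-- Variance of a real random variable `Z` under `μ`. -/
def rvVar {Ω : Type*} [MeasurableSpace Ω] (μ : Measure Ω) (Z : Ω → ℝ) : ℝ :=
  ∫ ω, (Z ω - ∫ ω', Z ω' ∂μ) ^ 2 ∂μ

open Real
open scoped NNReal

section GaussianMoments

open Polynomial

lemma deriv_eval_mul_exp_half_mul_sq (v : ℝ) (P : ℝ[X]) :
    deriv (fun s => P.eval s * exp (v * s ^ 2 / 2)) =
      fun t => (derivative P + C v * X * P).eval t * exp (v * t ^ 2 / 2) := by
  funext t
  have h : HasDerivAt (fun s => v * s ^ 2 / 2) (v * t) t :=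
    (((hasDerivAt_pow 2 t).const_mul v).div_const 2).congr_deriv (by push_cast; ring)
  exact ((P.hasDerivAt t).mul h.exp).deriv.trans
    (by simp only [eval_add, eval_mul, eval_C, eval_X]; ring)

lemma iteratedDeriv_eval_mul_exp_half_mul_sq (v : ℝ) (P : ℝ[X]) (k : ℕ) :
    iteratedDeriv k (fun s => P.eval s * exp (v * s ^ 2 / 2)) =
      fun t => ((fun Q => derivative Q + C v * X * Q)^[k] P).eval t * exp (v * t ^ 2 / 2) := by
  induction k generalizing P with
  | zero => simp
  | succ k ih => rw [iteratedDeriv_succ', deriv_eval_mul_exp_half_mul_sq, ih]; rfl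

/-- The moments are the derivatives at `0` of the moment generating function
`t ↦ exp (v t² / 2)`. -/
lemma integral_pow_gaussianReal_eq_eval (v : ℝ≥0) (k : ℕ) :
    ∫ x, x ^ k ∂gaussianReal 0 v = ((fun P => derivative P + C (v : ℝ) * X * P)^[k] 1).eval 0 := by
  have h := iteratedDeriv_mgf_zero (X := id) (μ := gaussianReal 0 v) (by simp) k
  rw [show mgf id (gaussianReal 0 v) = fun s => (1 : ℝ[X]).eval s * exp (v * s ^ 2 / 2) by
    simp [mgf_id_gaussianReal], iteratedDeriv_eval_mul_exp_half_mul_sq] at h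
  simpa using h.symm

lemma integral_sq_gaussianReal (v : ℝ≥0) : ∫ x, x ^ 2 ∂gaussianReal 0 v = v := by
  simp [integral_pow_gaussianReal_eq_eval]

lemma integral_pow_four_gaussianReal (v : ℝ≥0) : ∫ x, x ^ 4 ∂gaussianReal 0 v = 3 * v ^ 2 := by
  simp only [integral_pow_gaussianReal_eq_eval, Function.iterate_succ_apply',
    Function.iterate_zero_apply, derivative_add, derivative_mul, derivative_C, derivative_X,
    derivative_one, derivative_zero, eval_add, eval_mul, eval_C, eval_X, eval_one, eval_zero]
  ring

end GaussianMoments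

lemma map_dotProduct_pi_gaussianReal {ι : Type*} [Fintype ι] (v : ι → ℝ) :
    (Measure.pi fun _ : ι => gaussianReal 0 1).map (v ⬝ᵥ ·) =
      gaussianReal 0 (v ⬝ᵥ v).toNNReal := by
  have h : (v ⬝ᵥ ·) = innerSL ℝ (WithLp.toLp 2 v) ∘ WithLp.toLp 2 := by
    funext z; simp [EuclideanSpace.inner_toLp_toLp, dotProduct_comm]
  rw [h, ← Measure.map_map (by fun_prop) (by fun_prop), map_pi_eq_stdGaussian,
    IsGaussian.map_eq_gaussianReal, integral_strongDual_stdGaussian, variance_dual_stdGaussian,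
    innerSL_apply_norm, EuclideanSpace.real_norm_sq_eq]
  simp [dotProduct, sq]

lemma integrable_pow_gaussianReal (v : ℝ≥0) (k : ℕ) :
    Integrable (fun y : ℝ => y ^ k) (gaussianReal 0 v) :=
  (memLp_id_gaussianReal k).integrable_norm_pow'.mono' (by fun_prop)
    (ae_of_all _ fun y => by simp [norm_pow])

lemma sq_dotProduct_mul_dotProduct {ι : Type*} [Fintype ι] (u w y : ι → ℝ) :
    ((u ⬝ᵥ y) * (w ⬝ᵥ y)) ^ 2 =
      (((u + w) ⬝ᵥ y) ^ 4 + ((u - w) ⬝ᵥ y) ^ 4 - 2 * (u ⬝ᵥ y) ^ 4 - 2 * (w ⬝ᵥ y) ^ 4) / 12 := by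
  simp only [add_dotProduct, sub_dotProduct]; ring

/-- `x ∼ N(0, S Sᵀ)` under `μ`, stated through the one-dimensional marginals `v ⬝ᵥ x`, which
determine the law (Cramér–Wold). -/
def HasCenteredGaussianLaw {Ω ι : Type*} [MeasurableSpace Ω] [Fintype ι]
    (x : Ω → ι → ℝ) (S : Matrix ι ι ℝ) (μ : Measure Ω) : Prop :=
  ∀ v : ι → ℝ, HasLaw (fun ω => v ⬝ᵥ x ω) (gaussianReal 0 ((v ᵥ* S) ⬝ᵥ (v ᵥ* S)).toNNReal) μ

namespace HasCenteredGaussianLaw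

variable {Ω ι : Type*} [MeasurableSpace Ω] [Fintype ι] {μ : Measure Ω} {x : Ω → ι → ℝ}
  {S : Matrix ι ι ℝ}

lemma integrable_pow (hx : HasCenteredGaussianLaw x S μ) (v : ι → ℝ) (k : ℕ) :
    Integrable (fun ω => (v ⬝ᵥ x ω) ^ k) μ := by
  have h := integrable_pow_gaussianReal ((v ᵥ* S) ⬝ᵥ (v ᵥ* S)).toNNReal k
  rw [← (hx v).map_eq] at h
  exact h.comp_aemeasurable (hx v).aemeasurable

lemma memLp (hx : HasCenteredGaussianLaw x S μ) (v : ι → ℝ) (r : ℝ≥0) :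
    MemLp (fun ω => v ⬝ᵥ x ω) r μ := by
  have h := memLp_id_gaussianReal (μ := 0) (v := ((v ᵥ* S) ⬝ᵥ (v ᵥ* S)).toNNReal) r
  rw [← (hx v).map_eq] at h
  exact h.comp_of_map (hx v).aemeasurable

lemma integral_pow (hx : HasCenteredGaussianLaw x S μ) (v : ι → ℝ) (k : ℕ) :
    ∫ ω, (v ⬝ᵥ x ω) ^ k ∂μ = ∫ y, y ^ k ∂gaussianReal 0 ((v ᵥ* S) ⬝ᵥ (v ᵥ* S)).toNNReal :=
  (hx v).integral_comp (f := fun y => y ^ k) (by fun_prop)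

lemma integral_sq (hx : HasCenteredGaussianLaw x S μ) (v : ι → ℝ) :
    ∫ ω, (v ⬝ᵥ x ω) ^ 2 ∂μ = (v ᵥ* S) ⬝ᵥ (v ᵥ* S) := by
  rw [hx.integral_pow, integral_sq_gaussianReal,
    Real.coe_toNNReal _ (by simpa using dotProduct_self_star_nonneg (v ᵥ* S))]

lemma integral_pow_four (hx : HasCenteredGaussianLaw x S μ) (v : ι → ℝ) :
    ∫ ω, (v ⬝ᵥ x ω) ^ 4 ∂μ = 3 * ((v ᵥ* S) ⬝ᵥ (v ᵥ* S)) ^ 2 := by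
  rw [hx.integral_pow, integral_pow_four_gaussianReal,
    Real.coe_toNNReal _ (by simpa using dotProduct_self_star_nonneg (v ᵥ* S))]

lemma integral_mul (hx : HasCenteredGaussianLaw x S μ) (u w : ι → ℝ) :
    ∫ ω, (u ⬝ᵥ x ω) * (w ⬝ᵥ x ω) ∂μ = (u ᵥ* S) ⬝ᵥ (w ᵥ* S) := by
  have polarization : ∀ ω, (u ⬝ᵥ x ω) * (w ⬝ᵥ x ω) =
      (((u + w) ⬝ᵥ x ω) ^ 2 - ((u - w) ⬝ᵥ x ω) ^ 2) / 4 := fun ω => by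
    simp only [add_dotProduct, sub_dotProduct]; ring
  have := hx.integrable_pow
  simp_rw [polarization]
  rw [integral_div, integral_sub (by fun_prop) (by fun_prop), hx.integral_sq, hx.integral_sq]
  simp only [add_vecMul, sub_vecMul, add_dotProduct, dotProduct_add, sub_dotProduct,
    dotProduct_sub, dotProduct_comm (w ᵥ* S)]
  ring

lemma integrable_mul_sq (hx : HasCenteredGaussianLaw x S μ) (u w : ι → ℝ) :
    Integrable (fun ω => ((u ⬝ᵥ x ω) * (w ⬝ᵥ x ω)) ^ 2) μ := by
  have := hx.integrable_pow
  simp_rw [sq_dotProduct_mul_dotProduct]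
  fun_prop

lemma integral_mul_sq (hx : HasCenteredGaussianLaw x S μ) (u w : ι → ℝ) :
    ∫ ω, ((u ⬝ᵥ x ω) * (w ⬝ᵥ x ω)) ^ 2 ∂μ =
      ((u ᵥ* S) ⬝ᵥ (u ᵥ* S)) * ((w ᵥ* S) ⬝ᵥ (w ᵥ* S)) + 2 * ((u ᵥ* S) ⬝ᵥ (w ᵥ* S)) ^ 2 := by
  have := hx.integrable_pow
  simp_rw [sq_dotProduct_mul_dotProduct]
  rw [integral_div, integral_sub, integral_sub, integral_add, integral_const_mul,
    integral_const_mul, hx.integral_pow_four, hx.integral_pow_four, hx.integral_pow_four,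
    hx.integral_pow_four]
  · simp only [add_vecMul, sub_vecMul, add_dotProduct, dotProduct_add, sub_dotProduct,
      dotProduct_sub, dotProduct_comm (w ᵥ* S)]
    ring
  all_goals fun_prop

lemma memLp_mul (hx : HasCenteredGaussianLaw x S μ) (u w : ι → ℝ) :
    MemLp (fun ω => (u ⬝ᵥ x ω) * (w ⬝ᵥ x ω)) 2 μ :=
  (memLp_two_iff_integrable_sq ((hx u).aemeasurable.mul (hx w).aemeasurable).aestronglyMeasurable).2
    (hx.integrable_mul_sq u w)

lemma variance_mul [IsProbabilityMeasure μ] (hx : HasCenteredGaussianLaw x S μ) (u w : ι → ℝ) :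
    Var[fun ω => (u ⬝ᵥ x ω) * (w ⬝ᵥ x ω); μ] =
      ((u ᵥ* S) ⬝ᵥ (u ᵥ* S)) * ((w ᵥ* S) ⬝ᵥ (w ᵥ* S)) + ((u ᵥ* S) ⬝ᵥ (w ᵥ* S)) ^ 2 := by
  rw [variance_eq_sub (hx.memLp_mul u w)]
  simp only [Pi.pow_apply]
  rw [hx.integral_mul_sq, hx.integral_mul]
  ring

lemma comp {Ω' : Type*} [MeasurableSpace Ω'] {ν : Measure Ω'} {Z : Ω' → Ω}
    (hx : HasCenteredGaussianLaw x S μ) (hZ : HasLaw Z μ ν) :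
    HasCenteredGaussianLaw (fun ω' => x (Z ω')) S ν :=
  fun v => (hx v).comp hZ

end HasCenteredGaussianLaw

lemma hasCenteredGaussianLaw_map_mulVec {ι : Type*} [Fintype ι] (S : Matrix ι ι ℝ) :
    HasCenteredGaussianLaw id S ((Measure.pi fun _ : ι => gaussianReal 0 1).map (S *ᵥ ·)) := by
  intro v
  have hmeas : Measurable fun z : ι → ℝ => S *ᵥ z := by fun_prop
  refine ⟨by fun_prop, ?_⟩
  rw [Measure.map_map (by fun_prop) hmeas, ← map_dotProduct_pi_gaussianReal]
  congr 1
  funext z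
  simp [dotProduct_mulVec]

section WhiteNoise

variable {Ω E ι : Type*} [MeasurableSpace Ω] [MeasurableSpace E] {μ : Measure Ω}
  {Y : Ω → E} {ε : Ω → ι → ℝ}

lemma integral_comp_mul_noise (hY : Measurable Y) (hε : Measurable ε) (hind : IndepFun Y ε μ)
    {h : E → ℝ} (hh : Measurable h) (i : ι) :
    ∫ ω, h (Y ω) * ε ω i ∂μ = (∫ ω, h (Y ω) ∂μ) * ∫ ω, ε ω i ∂μ :=
  (hind.comp hh (measurable_pi_apply i)).integral_fun_mul_eq_mul_integral
    (hh.comp hY).aestronglyMeasurable ((measurable_pi_apply i).comp hε).aestronglyMeasurable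

lemma memLp_comp_mul_noise (hY : Measurable Y) (hε : Measurable ε) (hind : IndepFun Y ε μ)
    {h : E → ℝ} (hh : Measurable h) (hh2 : MemLp (fun ω => h (Y ω)) 2 μ) {i : ι}
    (hε2 : MemLp (fun ω => ε ω i) 2 μ) :
    MemLp (fun ω => h (Y ω) * ε ω i) 2 μ := by
  refine (memLp_two_iff_integrable_sq
    ((hh.comp hY).mul ((measurable_pi_apply i).comp hε)).aestronglyMeasurable).2 ?_
  exact ((hind.comp (hh.pow_const 2) ((measurable_pi_apply i).pow_const 2)).integrable_mul
    hh2.integrable_sq hε2.integrable_sq).congr (ae_of_all _ fun ω => by simp [mul_pow])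

variable [IsProbabilityMeasure μ]

lemma covariance_comp_comp_mul_noise (hY : Measurable Y) (hε : Measurable ε)
    (hind : IndepFun Y ε μ) {h h' : E → ℝ} (hh : Measurable h) (hh' : Measurable h')
    (hh2 : MemLp (fun ω => h (Y ω)) 2 μ) (hh'2 : MemLp (fun ω => h' (Y ω)) 2 μ) {i : ι}
    (hε2 : MemLp (fun ω => ε ω i) 2 μ) (hmean : ∫ ω, ε ω i ∂μ = 0) :
    cov[fun ω => h (Y ω), fun ω => h' (Y ω) * ε ω i; μ] = 0 := by
  rw [covariance_eq_sub hh2 (memLp_comp_mul_noise hY hε hind hh' hh'2 hε2)]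
  simp only [Pi.mul_apply, ← mul_assoc]
  rw [integral_comp_mul_noise hY hε hind (h := fun y => h y * h' y) (hh.mul hh'),
    integral_comp_mul_noise hY hε hind hh', hmean]
  ring

lemma covariance_comp_mul_noise_comp_mul_noise (hY : Measurable Y) (hε : Measurable ε)
    (hind : IndepFun Y ε μ) {h h' : E → ℝ} (hh : Measurable h) (hh' : Measurable h')
    (hh2 : MemLp (fun ω => h (Y ω)) 2 μ) (hh'2 : MemLp (fun ω => h' (Y ω)) 2 μ) {i k : ι}
    (hεi : MemLp (fun ω => ε ω i) 2 μ) (hεk : MemLp (fun ω => ε ω k) 2 μ)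
    (hmean : ∫ ω, ε ω i ∂μ = 0) :
    cov[fun ω => h (Y ω) * ε ω i, fun ω => h' (Y ω) * ε ω k; μ] =
      (∫ ω, h (Y ω) * h' (Y ω) ∂μ) * ∫ ω, ε ω i * ε ω k ∂μ := by
  rw [covariance_eq_sub (memLp_comp_mul_noise hY hε hind hh hh2 hεi)
    (memLp_comp_mul_noise hY hε hind hh' hh'2 hεk)]
  have hεε : Measurable fun e : ι → ℝ => e i * e k :=
    (measurable_pi_apply i).mul (measurable_pi_apply k)
  have hsplit := (hind.comp (hh.mul hh') hεε).integral_fun_mul_eq_mul_integral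
    ((hh.mul hh').comp hY).aestronglyMeasurable (hεε.comp hε).aestronglyMeasurable
  simp only [Pi.mul_apply, Function.comp_apply] at hsplit ⊢
  rw [integral_comp_mul_noise hY hε hind hh, hmean, mul_zero, zero_mul, sub_zero, ← hsplit]
  congr 1 with ω
  ring

variable [Fintype ι]

theorem variance_add_sum_mul_noise (hY : Measurable Y) (hε : Measurable ε)
    (hind : IndepFun Y ε μ) {f : E → ℝ} {g : ι → E → ℝ} (hf : Measurable f)
    (hg : ∀ i, Measurable (g i)) (hf2 : MemLp (fun ω => f (Y ω)) 2 μ)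
    (hg2 : ∀ i, MemLp (fun ω => g i (Y ω)) 2 μ) (hε2 : ∀ i, MemLp (fun ω => ε ω i) 2 μ)
    (hmean : ∀ i, ∫ ω, ε ω i ∂μ = 0) {σ : ℝ} (hvar : ∀ i, ∫ ω, ε ω i ^ 2 ∂μ = σ ^ 2)
    (huncorr : ∀ i k, i ≠ k → ∫ ω, ε ω i * ε ω k ∂μ = 0) :
    Var[fun ω => f (Y ω) + ∑ i, g i (Y ω) * ε ω i; μ] =
      Var[fun ω => f (Y ω); μ] + σ ^ 2 * ∑ i, ∫ ω, g i (Y ω) ^ 2 ∂μ := by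
  have hgε i := memLp_comp_mul_noise hY hε hind (hg i) (hg2 i) (hε2 i)
  rw [variance_fun_add (Y := fun ω => ∑ i, g i (Y ω) * ε ω i) hf2
      (memLp_finsetSum _ fun i _ => hgε i), covariance_fun_sum_right hgε hf2,
    variance_fun_sum hgε]
  simp only [covariance_comp_comp_mul_noise hY hε hind hf (hg _) hf2 (hg2 _) (hε2 _) (hmean _),
    covariance_comp_mul_noise_comp_mul_noise hY hε hind (hg _) (hg _) (hg2 _) (hg2 _) (hε2 _)
      (hε2 _) (hmean _)]
  simp only [mul_zero, Finset.sum_const_zero, add_zero, Finset.mul_sum]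
  congr 1
  refine Finset.sum_congr rfl fun i _ => ?_
  rw [Finset.sum_eq_single i (fun k _ hki => by rw [huncorr i k hki.symm, mul_zero]) (by simp)]
  simp only [← sq, hvar, mul_comm]

end WhiteNoise

lemma hasCenteredGaussianLaw_rows_and_iIndepFun_of_map_eq {Ω ι κ : Type*} [MeasurableSpace Ω]
    {μ : Measure Ω} [IsProbabilityMeasure μ] [Fintype ι] [Fintype κ] (S : Matrix κ κ ℝ)
    {X : Ω → ι → κ → ℝ} (hX : Measurable X)
    (hXlaw : μ.map X = (Measure.pi fun _ : ι => Measure.pi fun _ : κ => gaussianReal 0 1).map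
      (fun z i => S *ᵥ z i)) :
    (∀ i, HasCenteredGaussianLaw (fun ω => X ω i) S μ) ∧ iIndepFun (fun i ω => X ω i) μ := by
  have : IsProbabilityMeasure ((Measure.pi fun _ : κ => gaussianReal 0 1).map (S *ᵥ ·)) :=
    Measure.isProbabilityMeasure_map (by fun_prop)
  have hlaw : HasLaw X (Measure.pi fun _ : ι =>
      (Measure.pi fun _ : κ => gaussianReal 0 1).map (S *ᵥ ·)) μ :=
    ⟨hX.aemeasurable, hXlaw.trans (Measure.pi_map_pi fun _ => by fun_prop)⟩
  have hrow (i : ι) := (measurePreserving_eval _ i).fun_comp_hasLaw hlaw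
  exact ⟨fun i => (hasCenteredGaussianLaw_map_mulVec S).comp (hrow i),
    (iIndepFun_iff_hasLaw_pi_pi hrow).2 hlaw⟩

lemma ProbabilityTheory.iIndepFun.variance_fun_sum_comp {Ω ι E : Type*} [MeasurableSpace Ω]
    [MeasurableSpace E] {μ : Measure Ω} [IsProbabilityMeasure μ] [Fintype ι] {Z : ι → Ω → E}
    (h : iIndepFun Z μ) {φ : E → ℝ} (hφ : Measurable φ)
    (h2 : ∀ i, MemLp (fun ω => φ (Z i ω)) 2 μ) :
    Var[fun ω => ∑ i, φ (Z i ω); μ] = ∑ i, Var[fun ω => φ (Z i ω); μ] := by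
  have := IndepFun.variance_sum (X := fun i ω => φ (Z i ω)) (s := Finset.univ)
    (fun i _ => h2 i) fun i _ k _ hik => (h.indepFun hik).comp hφ hφ
  convert this using 2
  ext ω
  simp

section MatrixAlgebra

variable {m k R : Type*} [Fintype m] [CommRing R]

lemma transpose_one_sub_mul_inv_mul [DecidableEq m] [Fintype k] [DecidableEq k]
    (A : Matrix k m R) : (1 - Aᵀ * (A * Aᵀ)⁻¹ * A)ᵀ = 1 - Aᵀ * (A * Aᵀ)⁻¹ * A := by
  simp [transpose_sub, transpose_mul, transpose_nonsing_inv, Matrix.mul_assoc]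

lemma one_sub_mul_inv_mul_mulVec [DecidableEq m] [Fintype k] [DecidableEq k]
    {A : Matrix k m R} {β : m → R} (hβ : A *ᵥ β = 0) : (1 - Aᵀ * (A * Aᵀ)⁻¹ * A) *ᵥ β = β := by
  rw [sub_mulVec, one_mulVec, ← mulVec_mulVec, hβ, mulVec_zero, sub_zero]

lemma mulVec_row_apply_of_isSymm {P : Matrix m m R} (hP : Pᵀ = P) (M : Matrix m m R) (j : m) :
    (P *ᵥ M j) j = (M * P) j j := by
  rw [mul_apply, mulVec, dotProduct]
  refine Finset.sum_congr rfl fun l _ => ?_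
  rw [← transpose_apply P, hP, mul_comm]

lemma vecMul_dotProduct_vecMul (S : Matrix m m R) (u w : m → R) :
    (u ᵥ* S) ⬝ᵥ (w ᵥ* S) = u ⬝ᵥ ((S * Sᵀ) *ᵥ w) := by
  rw [← mulVec_mulVec, mulVec_transpose, dotProduct_mulVec]

lemma mul_nonsing_inv_row_dotProduct_mulVec [DecidableEq m] (M B : Matrix m m R)
    (hB : IsUnit B.det) (j : m) (w : m → R) : (M * B⁻¹) j ⬝ᵥ (B *ᵥ w) = (M *ᵥ w) j := by
  change ((M * B⁻¹) *ᵥ (B *ᵥ w)) j = _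
  rw [mulVec_mulVec, nonsing_inv_mul_cancel_right _ _ hB]

lemma mul_transpose_mulVec_mulVec_add_apply {n : Type*} [Fintype n] (M : Matrix k m R)
    (x : n → m → R) (β : m → R) (e : n → R) (j : k) :
    ((M * (of x)ᵀ) *ᵥ (of x *ᵥ β + e)) j =
      ∑ i, (M j ⬝ᵥ x i) * (β ⬝ᵥ x i) + ∑ i, (M j ⬝ᵥ x i) * e i := by
  simp only [dotProduct_comm β]
  simp only [mulVec, dotProduct, mul_apply, transpose_apply, of_apply, Pi.add_apply, mul_add,
    Finset.sum_add_distrib, Finset.sum_mul]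

end MatrixAlgebra

lemma Matrix.PosSemidef.sqrt_mul_self {m : Type*} [Fintype m] [DecidableEq m] {B : Matrix m m ℝ}
    (hB : B.PosSemidef) : hB.sqrt * hB.sqrt = B := by
  conv_rhs => rw [hB.1.spectral_theorem, Unitary.conjStarAlgAut_apply]
  unfold Matrix.PosSemidef.sqrt
  have hU : (star hB.1.eigenvectorUnitary : Matrix m m ℝ) * hB.1.eigenvectorUnitary.1 = 1 :=
    Unitary.coe_star_mul_self _
  calc _ = hB.1.eigenvectorUnitary.1 * (diagonal ((↑) ∘ Real.sqrt ∘ hB.1.eigenvalues) *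
        ((star hB.1.eigenvectorUnitary : Matrix m m ℝ) * hB.1.eigenvectorUnitary.1) *
        diagonal ((↑) ∘ Real.sqrt ∘ hB.1.eigenvalues)) *
        (star hB.1.eigenvectorUnitary : Matrix m m ℝ) := by simp only [Matrix.mul_assoc]
    _ = _ := by
      rw [hU, Matrix.mul_one, diagonal_mul_diagonal]
      congr 3
      funext i
      simp [Real.mul_self_sqrt (hB.eigenvalues_nonneg i)]

lemma Matrix.PosSemidef.transpose_sqrt {m : Type*} [Fintype m] [DecidableEq m]
    {B : Matrix m m ℝ} (hB : B.PosSemidef) : hB.sqrtᵀ = hB.sqrt := by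
  rw [← conjTranspose_eq_transpose_of_trivial]
  unfold Matrix.PosSemidef.sqrt
  simp [Matrix.mul_assoc, star_eq_conjTranspose]

lemma Matrix.PosSemidef.vecMul_sqrt_dotProduct_vecMul_sqrt {m : Type*} [Fintype m]
    [DecidableEq m] {B : Matrix m m ℝ} (hB : B.PosSemidef) (u w : m → ℝ) :
    (u ᵥ* hB.sqrt) ⬝ᵥ (w ᵥ* hB.sqrt) = u ⬝ᵥ (B *ᵥ w) := by
  rw [vecMul_dotProduct_vecMul, hB.transpose_sqrt, hB.sqrt_mul_self]

lemma Matrix.PosSemidef.vecMul_sqrt_dotProduct_self {m : Type*} [Fintype m] [DecidableEq m]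
    {B : Matrix m m ℝ} (hB : B.PosSemidef) (w : m → ℝ) :
    (w ᵥ* hB.sqrt) ⬝ᵥ (w ᵥ* hB.sqrt) = sqNorm (hB.sqrt *ᵥ w) := by
  rw [← mulVec_transpose, hB.transpose_sqrt]
  simp [sqNorm, dotProduct, sq]

lemma Matrix.PosDef.row_mul_inv_vecMul_sqrt_dotProduct {m : Type*} [Fintype m] [DecidableEq m]
    {B : Matrix m m ℝ} (hB : B.PosDef) (M : Matrix m m ℝ) (j : m) (w : m → ℝ) :
    ((M * B⁻¹) j ᵥ* hB.posSemidef.sqrt) ⬝ᵥ (w ᵥ* hB.posSemidef.sqrt) = (M *ᵥ w) j := by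
  rw [hB.posSemidef.vecMul_sqrt_dotProduct_vecMul_sqrt,
    mul_nonsing_inv_row_dotProduct_mulVec _ _ ((isUnit_iff_isUnit_det _).1 hB.isUnit)]

lemma rvVar_eq_variance {Ω : Type*} [MeasurableSpace Ω] {μ : Measure Ω} {Z : Ω → ℝ}
    (hZ : AEMeasurable Z μ) : rvVar μ Z = Var[Z; μ] :=
  (variance_eq_integral hZ).symm

theorem stmt18_general {n p q : ℕ}
    {Ω : Type} [MeasurableSpace Ω] (μ : Measure Ω) [IsProbabilityMeasure μ]
    (Sg : Matrix (Fin p) (Fin p) ℝ) (hSg : Sg.PosDef)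
    (X : Ω → Fin n → Fin p → ℝ) (hXmeas : Measurable X)
    (hXlaw : Measure.map X μ =
      Measure.map (fun z : Fin n → Fin p → ℝ => fun i => hSg.posSemidef.sqrt *ᵥ z i)
        (Measure.pi fun _ : Fin n => Measure.pi fun _ : Fin p => gaussianReal 0 1))
    (σ : ℝ)
    (ε : Ω → Fin n → ℝ) (hεmeas : Measurable ε)
    (hiid : iIndepFun (fun i ω => ε ω i) μ)
    (hεmean : ∀ i, ∫ ω, ε ω i ∂μ = 0)
    (hεvar : ∀ i, ∫ ω, (ε ω i) ^ 2 ∂μ = σ ^ 2)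
    (hεint : ∀ i, Integrable (fun ω => (ε ω i) ^ 2) μ)
    (hindep : IndepFun X ε μ)
    (A : Matrix (Fin q) (Fin p) ℝ)
    (βs : Fin p → ℝ) (hc : A *ᵥ βs = 0) (j : Fin p) :
    let PAperp := (1 : Matrix (Fin p) (Fin p) ℝ) - Aᵀ * (A * Aᵀ)⁻¹ * A
    rvVar μ (fun ω =>
        ((n : ℝ)⁻¹ • ((PAperp * Sg⁻¹ * (Matrix.of (X ω))ᵀ) *ᵥ
          (Matrix.of (X ω) *ᵥ βs + ε ω))) j) =
      (n : ℝ)⁻¹ * (βs j) ^ 2 +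
        (σ ^ 2 + sqNorm (hSg.posSemidef.sqrt *ᵥ βs)) / n *
          (PAperp * Sg⁻¹ * PAperp) j j := by
  intro PAperp
  set S := hSg.posSemidef.sqrt
  set c : Fin p → ℝ := (PAperp * Sg⁻¹) j
  obtain ⟨hgauss, hrows⟩ := hasCenteredGaussianLaw_rows_and_iIndepFun_of_map_eq S hXmeas hXlaw
  have hε2 (i : Fin n) : MemLp (fun ω => ε ω i) 2 μ :=
    (memLp_two_iff_integrable_sq (by fun_prop)).2 (hεint i)
  have huncorr (i k : Fin n) (hik : i ≠ k) : ∫ ω, ε ω i * ε ω k ∂μ = 0 := by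
    rw [(hiid.indepFun hik).integral_fun_mul_eq_mul_integral (by fun_prop) (by fun_prop),
      hεmean, zero_mul]
  have hsignal : Var[fun ω => ∑ i, (c ⬝ᵥ X ω i) * (βs ⬝ᵥ X ω i); μ] =
      n * (((c ᵥ* S) ⬝ᵥ (c ᵥ* S)) * ((βs ᵥ* S) ⬝ᵥ (βs ᵥ* S)) + ((c ᵥ* S) ⬝ᵥ (βs ᵥ* S)) ^ 2) := by
    rw [hrows.variance_fun_sum_comp (φ := fun x => (c ⬝ᵥ x) * (βs ⬝ᵥ x)) (by fun_prop)
      fun i => (hgauss i).memLp_mul c βs]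
    simp only [(hgauss _).variance_mul, Finset.sum_const, Finset.card_univ, Fintype.card_fin,
      nsmul_eq_mul]
  have hnoise := variance_add_sum_mul_noise hXmeas hεmeas hindep
    (f := fun x => ∑ i, (c ⬝ᵥ x i) * (βs ⬝ᵥ x i)) (g := fun i x => c ⬝ᵥ x i) (by fun_prop)
    (fun i => by fun_prop) (memLp_finsetSum _ fun i _ => (hgauss i).memLp_mul c βs)
    (fun i => (hgauss i).memLp c 2) hε2 hεmean hεvar huncorr
  simp only [Pi.smul_apply, smul_eq_mul, mul_transpose_mulVec_mulVec_add_apply]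
  rw [rvVar_eq_variance (by fun_prop), variance_const_mul, hnoise, hsignal]
  simp only [(hgauss _).integral_sq, Finset.sum_const, Finset.card_univ, Fintype.card_fin,
    nsmul_eq_mul]
  rw [hSg.posSemidef.vecMul_sqrt_dotProduct_self βs, hSg.row_mul_inv_vecMul_sqrt_dotProduct,
    hSg.row_mul_inv_vecMul_sqrt_dotProduct, one_sub_mul_inv_mul_mulVec hc,
    mulVec_row_apply_of_isSymm (transpose_one_sub_mul_inv_mul A)]
  rcases eq_or_ne (n : ℝ) 0 with hn | hn
  · simp [hn]
  · field_simp
    ring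

/-- Variance of a coordinate of the projected oracle estimator for a
Gaussian design: with rows of `X` i.i.d. `N(0, Σ)` (encoded via the positive
semidefinite square root of `Σ`), i.i.d. noise of mean `0` and variance `σ²`
independent of `X`, and `Aβ* = 0`, the estimator `β̂_{Σ,P} := (1/n)·P_{A⊥}Σ⁻¹Xᵀy`
satisfies
`Var(β̂_{Σ,P,j}) = (1/n)(β*ⱼ)² + ((σ² + ‖Σ^{1/2}β*‖²)/n)·eⱼᵀP_{A⊥}Σ⁻¹P_{A⊥}eⱼ`. -/
theorem stmt18 {n p q : ℕ} (hqp : q < p)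
    {Ω : Type} [MeasurableSpace Ω] (μ : Measure Ω) [IsProbabilityMeasure μ]
    (Sg : Matrix (Fin p) (Fin p) ℝ) (hSg : Sg.PosDef)
    (X : Ω → Fin n → Fin p → ℝ) (hXmeas : Measurable X)
    (hXlaw : Measure.map X μ =
      Measure.map (fun z : Fin n → Fin p → ℝ => fun i => hSg.posSemidef.sqrt *ᵥ z i)
        (Measure.pi fun _ : Fin n => Measure.pi fun _ : Fin p => gaussianReal 0 1))
    (σ : ℝ)
    (ε : Ω → Fin n → ℝ) (hεmeas : Measurable ε)
    (hiid : iIndepFun (fun i ω => ε ω i) μ)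
    (hident : ∀ i i', Measure.map (fun ω => ε ω i) μ = Measure.map (fun ω => ε ω i') μ)
    (hεmean : ∀ i, ∫ ω, ε ω i ∂μ = 0)
    (hεvar : ∀ i, ∫ ω, (ε ω i) ^ 2 ∂μ = σ ^ 2)
    (hεint : ∀ i, Integrable (fun ω => (ε ω i) ^ 2) μ)
    (hindep : IndepFun X ε μ)
    (A : Matrix (Fin q) (Fin p) ℝ) (hA : A.rank = q)
    (βs : Fin p → ℝ) (hc : A *ᵥ βs = 0) (j : Fin p) :
    let PAperp := (1 : Matrix (Fin p) (Fin p) ℝ) - Aᵀ * (A * Aᵀ)⁻¹ * A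
    rvVar μ (fun ω =>
        ((n : ℝ)⁻¹ • ((PAperp * Sg⁻¹ * (Matrix.of (X ω))ᵀ) *ᵥ
          (Matrix.of (X ω) *ᵥ βs + ε ω))) j) =
      (n : ℝ)⁻¹ * (βs j) ^ 2 +
        (σ ^ 2 + sqNorm (hSg.posSemidef.sqrt *ᵥ βs)) / n *
          (PAperp * Sg⁻¹ * PAperp) j j :=
  stmt18_general μ Sg hSg X hXmeas hXlaw σ ε hεmeas hiid hεmean hεvar hεint hindep A βs hc j
end
end
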